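/- arXiv:2212.03531 — 4 statements merged into one kernel-verified Lean document; each statement's English description precedes it below -/
import Mathlib

section
/- Let 1/4 ≤ a ≤ 1 and 0 < ρ < 1. Then the L² norm of μ^{-1/2+a} N_ρ over ℝ³ is comparable to (1-ρ)^{-1/4}; i.e. there exist constants c, C > 0 independent of ρ such that c (1-ρ)^{-1/2} ≤ ∫_{ℝ³} μ(v)^{2a}/(1 - ρμ(v))² dv ≤ C (1-ρ)^{-1/2}. -/
open MeasureTheory Real

noncomputable def quantumMu (v : EuclideanSpace ℝ (Fin 3)) : ℝ := Real.exp (-‖v‖^2 / 2)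

/-!
Write `b = 1 - ρ` and `x = ‖v‖²`. Since `1 - ρμ = b + ρ(1 - μ)` and `x / (2 + x) ≤ 1 - μ ≤ x / 2`,
the integrand lies between `e^{-x} / (b + x)²` and `256 / (b + x)²`. The substitution `v = √b • y`
turns `∫ φ(‖v‖²) / (b + ‖v‖²)² dv` into `b^{d/2 - 2} ∫ φ(b‖y‖²) / (1 + ‖y‖²)² dy`; in dimension
`d = 3 < 4` the last integral converges, and for `φ = exp ∘ neg` it only grows as `b ≤ 1` decreases.
This gives both bounds with the exponent `3/2 - 2 = -1/2`.
-/

open Module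

theorem abs_exp_neg_le_one {x : ℝ} (hx : 0 ≤ x) : |exp (-x)| ≤ 1 := by
  rwa [abs_of_pos (exp_pos _), exp_le_one_iff, neg_nonpos]

theorem div_one_add_le_one_sub_exp_neg {x : ℝ} (hx : -1 < x) : x / (1 + x) ≤ 1 - exp (-x) := by
  have h : exp (-x) ≤ (1 + x)⁻¹ := by
    rw [exp_neg]
    exact inv_anti₀ (by linarith) (by linarith [add_one_le_exp x])
  have h1 : x / (1 + x) = 1 - (1 + x)⁻¹ := by
    field_simp [show 1 + x ≠ 0 by linarith]
    ring
  linarith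

theorem two_add_sq_mul_exp_neg_le {x : ℝ} (hx : 0 ≤ x) : (2 + x) ^ 2 * exp (-(x / 4)) ≤ 64 := by
  have h : (1 + x / 8) ^ 2 ≤ exp (x / 4) := by
    rw [show x / 4 = x / 8 * 2 by ring, exp_mul, rpow_two]
    gcongr
    linarith [add_one_le_exp (x / 8)]
  rw [exp_neg, ← div_eq_mul_inv, div_le_iff₀ (exp_pos _)]
  nlinarith

section Integrand

variable {a ρ x : ℝ}

theorem exp_neg_div_add_sq_le_rpow_div_one_sub_mul_sq (ha : a ≤ 1) (hρ0 : 0 ≤ ρ) (hρ1 : ρ < 1)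
    (hx : 0 ≤ x) :
    exp (-x) / (1 - ρ + x) ^ 2 ≤ exp (-x / 2) ^ (2 * a) / (1 - ρ * exp (-x / 2)) ^ 2 := by
  have hm1 : exp (-x / 2) ≤ 1 := exp_le_one_iff.2 (by linarith)
  have hm : 1 - exp (-x / 2) ≤ x / 2 := by linarith [add_one_le_exp (-x / 2)]
  have hD : 0 < 1 - ρ * exp (-x / 2) := by nlinarith
  rw [← exp_mul]
  gcongr
  · nlinarith
  · nlinarith

theorem rpow_div_one_sub_mul_sq_le_div_add_sq (ha : 1 / 4 ≤ a) (hρ0 : 0 ≤ ρ) (hρ1 : ρ < 1)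
    (hx : 0 ≤ x) :
    exp (-x / 2) ^ (2 * a) / (1 - ρ * exp (-x / 2)) ^ 2 ≤ 256 / (1 - ρ + x) ^ 2 := by
  set m := exp (-x / 2)
  have hm0 : 0 < m := exp_pos _
  have hm1 : m ≤ 1 := exp_le_one_iff.2 (by linarith)
  have hm : x / (2 + x) ≤ 1 - m := by
    have := div_one_add_le_one_sub_exp_neg (x := x / 2) (by linarith)
    rwa [show x / 2 / (1 + x / 2) = x / (2 + x) by field_simp, show -(x / 2) = -x / 2 by ring]
      at this
  rw [div_le_iff₀ (by positivity)] at hm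
  -- `1 - ρ m ≥ max (1 - ρ) (1 - m)` and `1 - ρ + x / (2 + x) ≥ (1 - ρ + x) / (2 + x)`
  have hD : 1 - ρ + x ≤ 2 * (2 + x) * (1 - ρ * m) := by nlinarith
  have hD0 : 0 < 1 - ρ * m := by nlinarith
  have hnum : m ^ (2 * a) ≤ exp (-(x / 4)) := by
    rw [← exp_mul]
    exact exp_le_exp.2 (by nlinarith)
  rw [div_le_div_iff₀ (by positivity) (by positivity)]
  calc m ^ (2 * a) * (1 - ρ + x) ^ 2
      ≤ exp (-(x / 4)) * (2 * (2 + x) * (1 - ρ * m)) ^ 2 := by gcongr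
    _ = 4 * ((2 + x) ^ 2 * exp (-(x / 4))) * (1 - ρ * m) ^ 2 := by ring
    _ ≤ 4 * 64 * (1 - ρ * m) ^ 2 := by gcongr; exact two_add_sq_mul_exp_neg_le hx
    _ = 256 * (1 - ρ * m) ^ 2 := by norm_num

end Integrand

theorem integral_comp_sq_norm_div_one_add_sq_norm_sq_pos {E : Type*} [NormedAddCommGroup E]
    [MeasurableSpace E] {μ : Measure E} [μ.IsOpenPosMeasure] {φ : ℝ → ℝ} (hφ : Continuous φ)
    (hφ_pos : ∀ x, 0 < φ x) (hint : Integrable (fun y => φ (‖y‖ ^ 2) / (1 + ‖y‖ ^ 2) ^ 2) μ) :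
    0 < ∫ y, φ (‖y‖ ^ 2) / (1 + ‖y‖ ^ 2) ^ 2 ∂μ :=
  integral_pos_of_integrable_nonneg_nonzero (x := 0) (by fun_prop (disch := intros; positivity))
    hint (fun y => (div_pos (hφ_pos _) (by positivity)).le) (div_pos (hφ_pos _) (by positivity)).ne'

section Scaling

variable {E : Type*} [NormedAddCommGroup E] [NormedSpace ℝ E] [FiniteDimensional ℝ E]
  [MeasurableSpace E] [BorelSpace E] (μ : Measure E) [μ.IsAddHaarMeasure]

theorem integral_comp_sq_norm_div_add_sq_norm_sq (φ : ℝ → ℝ) {b : ℝ} (hb : 0 < b) :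
    ∫ v, φ (‖v‖ ^ 2) / (b + ‖v‖ ^ 2) ^ 2 ∂μ =
      b ^ (((finrank ℝ E : ℝ) - 4) / 2) * ∫ y, φ (b * ‖y‖ ^ 2) / (1 + ‖y‖ ^ 2) ^ 2 ∂μ := by
  have hs : 0 < √b := Real.sqrt_pos.2 hb
  have hscaled (y : E) : φ (‖√b • y‖ ^ 2) / (b + ‖√b • y‖ ^ 2) ^ 2 =
      (b ^ 2)⁻¹ * (φ (b * ‖y‖ ^ 2) / (1 + ‖y‖ ^ 2) ^ 2) := by
    rw [norm_smul, Real.norm_of_nonneg hs.le, mul_pow, Real.sq_sqrt hb.le]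
    field_simp
  have h := Measure.integral_comp_smul μ (fun v => φ (‖v‖ ^ 2) / (b + ‖v‖ ^ 2) ^ 2) √b
  simp only [hscaled, integral_const_mul, smul_eq_mul] at h
  have hpow : (√b ^ finrank ℝ E)⁻¹ * b ^ (((finrank ℝ E : ℝ) - 4) / 2) = (b ^ 2)⁻¹ := by
    rw [Real.sqrt_eq_rpow, ← Real.rpow_natCast, ← Real.rpow_mul hb.le, ← Real.rpow_neg hb.le,
      ← Real.rpow_add hb, ← Real.rpow_two, ← Real.rpow_neg hb.le]
    ring_nf
  rw [abs_of_pos (by positivity), ← hpow, mul_assoc] at h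
  exact (mul_left_cancel₀ (by positivity) h).symm

variable {μ}

theorem integrable_inv_add_sq_norm_sq (hE : finrank ℝ E < 4) {b : ℝ} (hb : 0 < b) :
    Integrable (fun v => ((b + ‖v‖ ^ 2) ^ 2)⁻¹) μ := by
  have hs : 0 < √b := Real.sqrt_pos.2 hb
  have h1 : Integrable (fun v : E => ((1 + ‖v‖ ^ 2) ^ 2)⁻¹) μ := by
    refine (integrable_rpow_neg_one_add_norm_sq (μ := μ) (r := 4) (by exact_mod_cast hE)).congr
      (Filter.Eventually.of_forall fun v => ?_)
    beta_reduce
    rw [show (-4 : ℝ) / 2 = ((-2 : ℤ) : ℝ) by norm_num, Real.rpow_intCast, zpow_neg, zpow_ofNat]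
  refine ((h1.comp_smul (inv_ne_zero hs.ne')).const_mul (b ^ 2)⁻¹).congr
    (Filter.Eventually.of_forall fun v => ?_)
  simp only [norm_smul, norm_inv, Real.norm_of_nonneg hs.le, mul_pow, inv_pow,
    Real.sq_sqrt hb.le]
  field_simp

theorem integrable_comp_sq_norm_div_add_sq_norm_sq (hE : finrank ℝ E < 4) {φ : ℝ → ℝ}
    (hφ : Measurable φ) {M : ℝ} (hM : ∀ x, 0 ≤ x → |φ x| ≤ M) {b : ℝ} (hb : 0 < b) :
    Integrable (fun v => φ (‖v‖ ^ 2) / (b + ‖v‖ ^ 2) ^ 2) μ := by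
  refine ((integrable_inv_add_sq_norm_sq hE hb).const_mul M).mono'
    (by fun_prop : Measurable _).aestronglyMeasurable (Filter.Eventually.of_forall fun v => ?_)
  rw [norm_div, Real.norm_eq_abs, Real.norm_of_nonneg (by positivity), div_eq_mul_inv]
  gcongr
  exact hM _ (by positivity)

theorem integrable_exp_neg_sq_norm_div_add_sq_norm_sq (hE : finrank ℝ E < 4) {b : ℝ}
    (hb : 0 < b) : Integrable (fun v => exp (-‖v‖ ^ 2) / (b + ‖v‖ ^ 2) ^ 2) μ :=
  integrable_comp_sq_norm_div_add_sq_norm_sq (φ := fun x => exp (-x)) hE (by fun_prop)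
    (fun _ => abs_exp_neg_le_one) hb

theorem integrable_const_div_add_sq_norm_sq (hE : finrank ℝ E < 4) (c : ℝ) {b : ℝ}
    (hb : 0 < b) : Integrable (fun v => c / (b + ‖v‖ ^ 2) ^ 2) μ := by
  simpa only [div_eq_mul_inv] using (integrable_inv_add_sq_norm_sq hE hb).const_mul c

theorem mul_rpow_le_integral_exp_neg_sq_norm_div (hE : finrank ℝ E < 4) {b : ℝ} (hb : 0 < b)
    (hb1 : b ≤ 1) :
    (∫ y, exp (-‖y‖ ^ 2) / (1 + ‖y‖ ^ 2) ^ 2 ∂μ) * b ^ (((finrank ℝ E : ℝ) - 4) / 2) ≤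
      ∫ v, exp (-‖v‖ ^ 2) / (b + ‖v‖ ^ 2) ^ 2 ∂μ := by
  rw [integral_comp_sq_norm_div_add_sq_norm_sq μ (fun x => exp (-x)) hb, mul_comm]
  refine mul_le_mul_of_nonneg_left (integral_mono ?_ ?_ fun y => ?_) (by positivity)
  · exact integrable_exp_neg_sq_norm_div_add_sq_norm_sq hE one_pos
  · exact integrable_comp_sq_norm_div_add_sq_norm_sq (φ := fun x => exp (-(b * x))) hE
      (by fun_prop) (fun _ hx => abs_exp_neg_le_one (mul_nonneg hb.le hx)) one_pos
  · dsimp only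
    gcongr
    nlinarith [sq_nonneg ‖y‖]

end Scaling

theorem integrable_quantumMu_rpow_div_sq {a ρ : ℝ} (ha : 1 / 4 ≤ a) (hρ0 : 0 ≤ ρ)
    (hρ1 : ρ < 1) :
    Integrable fun v : EuclideanSpace ℝ (Fin 3) =>
      quantumMu v ^ (2 * a) / (1 - ρ * quantumMu v) ^ 2 :=
  (integrable_const_div_add_sq_norm_sq (by simp) 256 (sub_pos.2 hρ1)).mono'
    (by unfold quantumMu; fun_prop : Measurable _).aestronglyMeasurable
    (Filter.Eventually.of_forall fun v => by
      rw [Real.norm_of_nonneg (by unfold quantumMu; positivity)]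
      exact rpow_div_one_sub_mul_sq_le_div_add_sq ha hρ0 hρ1 (by positivity))

theorem stmt_2 (a : ℝ) (ha1 : 1/4 ≤ a) (ha2 : a ≤ 1) :
    ∃ c C : ℝ, 0 < c ∧ 0 < C ∧ ∀ ρ : ℝ, 0 < ρ → ρ < 1 →
      c * (1 - ρ) ^ (-(1:ℝ)/2) ≤
        ∫ v : EuclideanSpace ℝ (Fin 3), (quantumMu v) ^ (2*a) / (1 - ρ * quantumMu v)^2 ∧
      (∫ v : EuclideanSpace ℝ (Fin 3), (quantumMu v) ^ (2*a) / (1 - ρ * quantumMu v)^2) ≤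
        C * (1 - ρ) ^ (-(1:ℝ)/2) := by
  have hE : finrank ℝ (EuclideanSpace ℝ (Fin 3)) < 4 := by simp
  have hexponent : ((finrank ℝ (EuclideanSpace ℝ (Fin 3)) : ℝ) - 4) / 2 = -(1:ℝ) / 2 := by norm_num
  refine ⟨_, _, integral_comp_sq_norm_div_one_add_sq_norm_sq_pos (φ := fun x => exp (-x))
      (by fun_prop) (fun _ => exp_pos _)
      (integrable_exp_neg_sq_norm_div_add_sq_norm_sq (μ := volume) hE one_pos),
    integral_comp_sq_norm_div_one_add_sq_norm_sq_pos (φ := fun _ => 256) continuous_const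
      (fun _ => by norm_num) (integrable_const_div_add_sq_norm_sq (μ := volume) hE 256 one_pos),
    fun ρ hρ0 hρ1 => ?_⟩
  have hb : 0 < 1 - ρ := sub_pos.2 hρ1
  have hint := integrable_quantumMu_rpow_div_sq ha1 hρ0.le hρ1
  constructor
  · calc _ ≤ ∫ v : EuclideanSpace ℝ (Fin 3), exp (-‖v‖ ^ 2) / (1 - ρ + ‖v‖ ^ 2) ^ 2 := by
          simpa only [hexponent] using mul_rpow_le_integral_exp_neg_sq_norm_div hE hb (by linarith)
      _ ≤ _ := integral_mono (integrable_exp_neg_sq_norm_div_add_sq_norm_sq hE hb) hint fun v =>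
          exp_neg_div_add_sq_le_rpow_div_one_sub_mul_sq ha2 hρ0.le hρ1 (by positivity)
  · calc _ ≤ ∫ v : EuclideanSpace ℝ (Fin 3), 256 / (1 - ρ + ‖v‖ ^ 2) ^ 2 :=
          integral_mono hint (integrable_const_div_add_sq_norm_sq hE 256 hb) fun v =>
            rpow_div_one_sub_mul_sq_le_div_add_sq ha1 hρ0.le hρ1 (by positivity)
      _ = _ := by
          rw [integral_comp_sq_norm_div_add_sq_norm_sq volume (fun _ => 256) hb, hexponent,
            mul_comm]
end

section
/- Let 1/4 ≤ a ≤ 1 and 0 < ρ < 1. Then ∫_{ℝ³} (1 - ρμ(v))^{-4} μ(v)^{2a} |v|² dv is comparable to (1-ρ)^{-3/2}, with constants independent of ρ. -/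
/-! Write `ε = 1 - ρ` and `t = ‖v‖²/2`, so that `1 - ρ μ(v) = (1 - e⁻ᵗ) + ε e⁻ᵗ`.
Since `e⁻ᵗ ≤ 1/(1 + t)`, this denominator is at least `(ε + t)/(1 + t)`, and the factor
`(1 + t)⁴` is absorbed by `μ^{2a} ≤ e^{-t/2}`, valid for `a ≥ 1/4`. So the integrand is bounded
by a multiple of the model kernel `‖v‖²/(ε + ‖v‖²/2)⁴`, whose integral is exactly `ε^{-3/2}`
times its value at `ε = 1`, by the substitution `v = √ε w`.
Conversely, on the annulus `√ε/2 ≤ ‖v‖ < √ε` the denominator is at most `3ε/2` and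
`‖v‖² ≥ ε/4`, so the integrand is `≳ ε⁻³` on a set of volume `≍ ε^{3/2}`. -/

open MeasureTheory Real

open Metric Module

local notation "ℝ³" => EuclideanSpace ℝ (Fin 3)

lemma one_sub_mul_exp_neg_le {ρ t : ℝ} (hρ0 : 0 ≤ ρ) (hρ1 : ρ ≤ 1) (ht : 0 ≤ t) :
    1 - ρ * exp (-t) ≤ 1 - ρ + t := by
  nlinarith [add_one_le_exp (-t)]

lemma div_one_add_le_one_sub_mul_exp_neg {ρ t : ℝ} (hρ : 0 ≤ ρ) (ht : 0 ≤ t) :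
    (1 - ρ + t) / (1 + t) ≤ 1 - ρ * exp (-t) := by
  have hexp : (1 + t) * exp (-t) ≤ 1 := by
    simpa [← exp_add, add_comm] using
      mul_le_mul_of_nonneg_right (add_one_le_exp t) (exp_pos (-t)).le
  rw [div_le_iff₀ (by positivity)]
  nlinarith

lemma one_add_le_eight_mul_exp (t : ℝ) : 1 + t ≤ 8 * exp (t / 8) := by
  linarith [add_one_le_exp (t / 8)]

lemma rpow_neg_three_div_two {s : ℝ} (hs : 0 ≤ s) : s ^ (-(3:ℝ)/2) = (√s ^ 3)⁻¹ := by
  rw [sqrt_eq_rpow, ← rpow_mul_natCast hs, neg_div, rpow_neg hs]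
  norm_num

lemma addHaar_real_ball_diff_ball_half {E : Type*} [NormedAddCommGroup E] [NormedSpace ℝ E]
    [MeasurableSpace E] [BorelSpace E] [FiniteDimensional ℝ E] [Nontrivial E]
    (μ : Measure E) [μ.IsAddHaarMeasure] {r : ℝ} (hr : 0 ≤ r) :
    μ.real (ball 0 r \ ball 0 (r / 2)) =
      (1 - (2 ^ finrank ℝ E)⁻¹) * r ^ finrank ℝ E * μ.real (ball 0 1) := by
  have hball : ∀ {s : ℝ}, 0 ≤ s → μ.real (ball 0 s) = s ^ finrank ℝ E * μ.real (ball 0 1) := by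
    intro s hs
    rw [measureReal_def, Measure.addHaar_ball μ 0 hs, ENNReal.toReal_mul,
      ENNReal.toReal_ofReal (by positivity), measureReal_def]
  have hsub : ball (0 : E) (r / 2) ⊆ ball 0 r := ball_subset_ball (by linarith)
  rw [measureReal_sdiff hsub measurableSet_ball, hball hr,
    hball (s := r / 2) (by positivity), div_pow]
  ring

noncomputable def modelKernel (s : ℝ) (v : ℝ³) : ℝ := ‖v‖ ^ 2 / (s + ‖v‖ ^ 2 / 2) ^ 4

lemma modelKernel_nonneg (s : ℝ) (v : ℝ³) : 0 ≤ modelKernel s v := by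
  unfold modelKernel; positivity

lemma continuous_modelKernel {s : ℝ} (hs : 0 < s) : Continuous (modelKernel s) := by
  unfold modelKernel
  exact Continuous.div (by fun_prop) (by fun_prop) fun v => by positivity

lemma modelKernel_sqrt_smul {s : ℝ} (hs : 0 < s) (x : ℝ³) :
    modelKernel s (√s • x) = (s ^ 3)⁻¹ * modelKernel 1 x := by
  have hnorm : ‖√s • x‖ ^ 2 = s * ‖x‖ ^ 2 := by
    rw [norm_smul, norm_of_nonneg (sqrt_nonneg s), mul_pow, sq_sqrt hs.le]
  unfold modelKernel
  rw [hnorm, show s + s * ‖x‖ ^ 2 / 2 = s * (1 + ‖x‖ ^ 2 / 2) by ring]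
  field_simp

lemma integrable_modelKernel_one : Integrable (modelKernel 1) := by
  have hdim : (finrank ℝ ℝ³ : ℝ) < 6 := by simp; norm_num
  refine ((integrable_one_add_norm hdim).const_mul 256).mono'
    (continuous_modelKernel one_pos).aestronglyMeasurable
    (Filter.Eventually.of_forall fun v => ?_)
  rw [norm_of_nonneg (modelKernel_nonneg 1 v), rpow_neg (by positivity),
    ← div_eq_mul_inv, modelKernel, div_le_div_iff₀ (by positivity) (by positivity)]
  norm_cast
  have hr := norm_nonneg v
  have h1 : (1 + ‖v‖) ^ 2 ≤ 4 * (1 + ‖v‖ ^ 2 / 2) := by nlinarith [sq_nonneg (‖v‖ - 1)]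
  have h2 : ‖v‖ ^ 2 ≤ (1 + ‖v‖) ^ 2 := by nlinarith
  calc ‖v‖ ^ 2 * (1 + ‖v‖) ^ 6 ≤ ((1 + ‖v‖) ^ 2) ^ 4 := by
        nlinarith [pow_pos (by positivity : 0 < 1 + ‖v‖) 6]
    _ ≤ (4 * (1 + ‖v‖ ^ 2 / 2)) ^ 4 := by gcongr
    _ = 256 * (1 + ‖v‖ ^ 2 / 2) ^ 4 := by ring

lemma integrable_modelKernel {s : ℝ} (hs : 0 < s) : Integrable (modelKernel s) := by
  rw [← integrable_comp_smul_iff volume (modelKernel s) (sqrt_pos.2 hs).ne']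
  simpa only [modelKernel_sqrt_smul hs] using integrable_modelKernel_one.const_mul (s ^ 3)⁻¹

lemma integral_modelKernel {s : ℝ} (hs : 0 < s) :
    ∫ v, modelKernel s v = (√s ^ 3)⁻¹ * ∫ v, modelKernel 1 v := by
  have h := Measure.integral_comp_smul volume (modelKernel s) √s
  simp only [modelKernel_sqrt_smul hs, integral_const_mul, finrank_euclideanSpace_fin,
    smul_eq_mul] at h
  rw [abs_of_pos (by positivity)] at h
  have hs' : s ^ 3 = √s ^ 3 * √s ^ 3 := by rw [← mul_pow, mul_self_sqrt hs.le]
  calc ∫ v, modelKernel s v = √s ^ 3 * ((√s ^ 3)⁻¹ * ∫ v, modelKernel s v) := by field_simp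
    _ = (√s ^ 3)⁻¹ * ∫ v, modelKernel 1 v := by rw [← h, hs']; field_simp

lemma integral_modelKernel_one_pos : 0 < ∫ v, modelKernel 1 v :=
  integral_pos_of_integrable_nonneg_nonzero (x := EuclideanSpace.single 0 1)
    (continuous_modelKernel one_pos) integrable_modelKernel_one (modelKernel_nonneg 1)
    (by norm_num [modelKernel])

noncomputable def quantumIntegrand (a ρ : ℝ) (v : ℝ³) : ℝ :=
  (1 - ρ * quantumMu v)⁻¹ ^ 4 * quantumMu v ^ (2 * a) * ‖v‖ ^ 2

lemma quantumMu_eq (v : ℝ³) : quantumMu v = exp (-(‖v‖ ^ 2 / 2)) := by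
  rw [quantumMu, neg_div]

lemma quantumMu_rpow (v : ℝ³) (b : ℝ) : quantumMu v ^ b = exp (-(b * (‖v‖ ^ 2 / 2))) := by
  rw [quantumMu_eq, ← exp_mul]
  ring_nf

lemma one_sub_mul_quantumMu_pos {ρ : ℝ} (hρ : ρ < 1) (v : ℝ³) : 0 < 1 - ρ * quantumMu v := by
  have hμ0 : 0 < quantumMu v := exp_pos _
  have hμ1 : quantumMu v ≤ 1 := by
    rw [quantumMu_eq]
    exact exp_le_one_iff.2 (by simp; positivity)
  nlinarith [mul_pos (sub_pos.2 hρ) hμ0]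

lemma quantumIntegrand_nonneg (a ρ : ℝ) (v : ℝ³) : 0 ≤ quantumIntegrand a ρ v := by
  unfold quantumIntegrand quantumMu
  positivity

lemma continuous_quantumIntegrand (a : ℝ) {ρ : ℝ} (hρ : ρ < 1) :
    Continuous (quantumIntegrand a ρ) := by
  have hμ : Continuous quantumMu := by unfold quantumMu; fun_prop
  have hinv : Continuous fun v => (1 - ρ * quantumMu v)⁻¹ :=
    (by fun_prop : Continuous fun v => 1 - ρ * quantumMu v).inv₀
      fun v => (one_sub_mul_quantumMu_pos hρ v).ne'
  have hpow : Continuous fun v => quantumMu v ^ (2 * a) :=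
    hμ.rpow_const fun v => Or.inl (exp_pos _).ne'
  unfold quantumIntegrand
  fun_prop

lemma quantumIntegrand_le_modelKernel {a ρ : ℝ} (ha : 1 / 4 ≤ a) (hρ0 : 0 ≤ ρ) (hρ1 : ρ < 1)
    (v : ℝ³) :
    quantumIntegrand a ρ v ≤ 8 ^ 4 * modelKernel (1 - ρ) v := by
  have hweight : quantumMu v ^ (2 * a) ≤ exp (-(‖v‖ ^ 2 / 2 / 2)) := by
    rw [quantumMu_rpow]
    exact exp_le_exp.2 (by nlinarith [sq_nonneg ‖v‖])
  set t := ‖v‖ ^ 2 / 2 with ht_def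
  have ht : 0 ≤ t := by positivity
  have hlower : (1 - ρ + t) / (1 + t) ≤ 1 - ρ * quantumMu v := by
    rw [quantumMu_eq]
    exact div_one_add_le_one_sub_mul_exp_neg hρ0 ht
  have hgrowth : (1 + t) ^ 4 ≤ 8 ^ 4 * exp (t / 2) :=
    calc (1 + t) ^ 4 ≤ (8 * exp (t / 8)) ^ 4 :=
        pow_le_pow_left₀ (by positivity) (one_add_le_eight_mul_exp t) 4
      _ = 8 ^ 4 * exp (t / 2) := by rw [mul_pow, ← exp_nat_mul]; ring_nf
  have hε : 0 < 1 - ρ + t := by linarith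
  calc quantumIntegrand a ρ v
        = quantumMu v ^ (2 * a) * ‖v‖ ^ 2 / (1 - ρ * quantumMu v) ^ 4 := by
        rw [quantumIntegrand, inv_pow, div_eq_mul_inv]; ring
    _ ≤ exp (-(t / 2)) * ‖v‖ ^ 2 / ((1 - ρ + t) / (1 + t)) ^ 4 := by gcongr
    _ = exp (-(t / 2)) * (1 + t) ^ 4 * modelKernel (1 - ρ) v := by
        rw [modelKernel, ← ht_def]; field_simp
    _ ≤ exp (-(t / 2)) * (8 ^ 4 * exp (t / 2)) * modelKernel (1 - ρ) v := by
        gcongr; exact modelKernel_nonneg _ _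
    _ = 8 ^ 4 * modelKernel (1 - ρ) v := by
        rw [mul_left_comm, ← exp_add, neg_add_cancel, exp_zero, mul_one]

lemma le_quantumIntegrand_of_mem_annulus {a ρ : ℝ} (ha : 0 ≤ a) (hρ0 : 0 ≤ ρ) (hρ1 : ρ < 1)
    {v : ℝ³} (hv : v ∈ ball 0 √(1 - ρ) \ ball 0 (√(1 - ρ) / 2)) :
    4 / 81 * exp (-a) / (1 - ρ) ^ 3 ≤ quantumIntegrand a ρ v := by
  set ε := 1 - ρ
  have hε : 0 < ε := sub_pos.2 hρ1
  have hv_lt : ‖v‖ ^ 2 < ε := (lt_sqrt (norm_nonneg v)).1 (mem_ball_zero_iff.1 hv.1)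
  have hv_ge : ε / 4 ≤ ‖v‖ ^ 2 := by
    have h := not_lt.1 (mt mem_ball_zero_iff.2 hv.2)
    nlinarith [sq_sqrt hε.le, sqrt_nonneg ε]
  have hD := one_sub_mul_quantumMu_pos hρ1 v
  have hμ : 0 < quantumMu v := exp_pos _
  have hD_le : 1 - ρ * quantumMu v ≤ 3 / 2 * ε := by
    rw [quantumMu_eq]
    linarith [one_sub_mul_exp_neg_le hρ0 hρ1.le (by positivity : 0 ≤ ‖v‖ ^ 2 / 2)]
  have hweight : exp (-a) ≤ quantumMu v ^ (2 * a) := by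
    rw [quantumMu_rpow]
    exact exp_le_exp.2 (by nlinarith)
  calc 4 / 81 * exp (-a) / ε ^ 3 = ((3 / 2 * ε) ^ 4)⁻¹ * exp (-a) * (ε / 4) := by
        field_simp; ring
    _ ≤ ((1 - ρ * quantumMu v) ^ 4)⁻¹ * quantumMu v ^ (2 * a) * ‖v‖ ^ 2 := by gcongr
    _ = quantumIntegrand a ρ v := by rw [quantumIntegrand, inv_pow]

lemma integrable_quantumIntegrand {a ρ : ℝ} (ha : 1 / 4 ≤ a) (hρ0 : 0 ≤ ρ) (hρ1 : ρ < 1) :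
    Integrable (quantumIntegrand a ρ) :=
  ((integrable_modelKernel (sub_pos.2 hρ1)).const_mul _).mono'
    (continuous_quantumIntegrand a hρ1).aestronglyMeasurable <|
      Filter.Eventually.of_forall fun v => by
        rw [norm_of_nonneg (quantumIntegrand_nonneg a ρ v)]
        exact quantumIntegrand_le_modelKernel ha hρ0 hρ1 v

lemma integral_quantumIntegrand_le {a ρ : ℝ} (ha : 1 / 4 ≤ a) (hρ0 : 0 ≤ ρ) (hρ1 : ρ < 1) :
    ∫ v, quantumIntegrand a ρ v ≤ 8 ^ 4 * (∫ v, modelKernel 1 v) * (1 - ρ) ^ (-(3:ℝ)/2) := by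
  have hε : 0 < 1 - ρ := sub_pos.2 hρ1
  calc ∫ v, quantumIntegrand a ρ v ≤ ∫ v, 8 ^ 4 * modelKernel (1 - ρ) v :=
        integral_mono (integrable_quantumIntegrand ha hρ0 hρ1)
          ((integrable_modelKernel hε).const_mul _) (quantumIntegrand_le_modelKernel ha hρ0 hρ1)
    _ = 8 ^ 4 * (∫ v, modelKernel 1 v) * (1 - ρ) ^ (-(3:ℝ)/2) := by
        rw [integral_const_mul, integral_modelKernel hε, rpow_neg_three_div_two hε.le]
        ring

lemma le_integral_quantumIntegrand {a ρ : ℝ} (ha : 0 ≤ a) (hρ0 : 0 ≤ ρ) (hρ1 : ρ < 1)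
    (hint : Integrable (quantumIntegrand a ρ)) :
    4 / 81 * exp (-a) * (7 / 8 * volume.real (ball (0 : ℝ³) 1)) * (1 - ρ) ^ (-(3:ℝ)/2) ≤
      ∫ v, quantumIntegrand a ρ v := by
  set ε := 1 - ρ
  have hε : 0 < ε := sub_pos.2 hρ1
  set S := ball (0 : ℝ³) √ε \ ball 0 (√ε / 2)
  have hS : volume S ≠ ⊤ := ((measure_mono Set.sdiff_subset).trans_lt measure_ball_lt_top).ne
  have hvol : volume.real S = 7 / 8 * √ε ^ 3 * volume.real (ball (0 : ℝ³) 1) := by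
    rw [addHaar_real_ball_diff_ball_half volume (sqrt_nonneg ε), finrank_euclideanSpace_fin]
    norm_num
  have hε3 : ε ^ 3 = √ε ^ 3 * √ε ^ 3 := by rw [← mul_pow, mul_self_sqrt hε.le]
  calc 4 / 81 * exp (-a) * (7 / 8 * volume.real (ball (0 : ℝ³) 1)) * ε ^ (-(3:ℝ)/2)
        = 4 / 81 * exp (-a) / ε ^ 3 * volume.real S := by
          rw [hvol, rpow_neg_three_div_two hε.le, hε3]
          field_simp
    _ ≤ ∫ v in S, quantumIntegrand a ρ v :=
        setIntegral_ge_of_const_le_real (measurableSet_ball.diff measurableSet_ball) hS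
          (fun v hv => le_quantumIntegrand_of_mem_annulus ha hρ0 hρ1 hv) hint.integrableOn
    _ ≤ ∫ v, quantumIntegrand a ρ v :=
        setIntegral_le_integral hint (Filter.Eventually.of_forall (quantumIntegrand_nonneg a ρ))

theorem stmt_3_general (a : ℝ) (ha1 : 1/4 ≤ a) :
    ∃ c C : ℝ, 0 < c ∧ 0 < C ∧ ∀ ρ : ℝ, 0 < ρ → ρ < 1 →
      c * (1 - ρ) ^ (-(3:ℝ)/2) ≤
        ∫ v : EuclideanSpace ℝ (Fin 3),
          (1 - ρ * quantumMu v)⁻¹ ^ (4:ℕ) * (quantumMu v) ^ (2*a) * ‖v‖^2 ∧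
      (∫ v : EuclideanSpace ℝ (Fin 3),
          (1 - ρ * quantumMu v)⁻¹ ^ (4:ℕ) * (quantumMu v) ^ (2*a) * ‖v‖^2) ≤
        C * (1 - ρ) ^ (-(3:ℝ)/2) := by
  have hball : 0 < volume.real (ball (0 : ℝ³) 1) :=
    ENNReal.toReal_pos (measure_ball_pos volume 0 one_pos).ne' measure_ball_lt_top.ne
  have hkernel := integral_modelKernel_one_pos
  refine ⟨4 / 81 * exp (-a) * (7 / 8 * volume.real (ball (0 : ℝ³) 1)),
    8 ^ 4 * ∫ v, modelKernel 1 v, by positivity, by positivity, fun ρ hρ0 hρ1 => ⟨?_, ?_⟩⟩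
  · exact le_integral_quantumIntegrand (by linarith) hρ0.le hρ1
      (integrable_quantumIntegrand ha1 hρ0.le hρ1)
  · exact integral_quantumIntegrand_le ha1 hρ0.le hρ1

theorem stmt_3 (a : ℝ) (ha1 : 1/4 ≤ a) (ha2 : a ≤ 1) :
    ∃ c C : ℝ, 0 < c ∧ 0 < C ∧ ∀ ρ : ℝ, 0 < ρ → ρ < 1 →
      c * (1 - ρ) ^ (-(3:ℝ)/2) ≤
        ∫ v : EuclideanSpace ℝ (Fin 3),
          (1 - ρ * quantumMu v)⁻¹ ^ (4:ℕ) * (quantumMu v) ^ (2*a) * ‖v‖^2 ∧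
      (∫ v : EuclideanSpace ℝ (Fin 3),
          (1 - ρ * quantumMu v)⁻¹ ^ (4:ℕ) * (quantumMu v) ^ (2*a) * ‖v‖^2) ≤
        C * (1 - ρ) ^ (-(3:ℝ)/2) :=
  stmt_3_general a ha1
end

section
/- Let β < 0, 0 < δ < 1, and φ(v) = (1 - U_δ^{β/2}(v)) μ(v)^{1/2} where U_δ(v) = (1+δ²|v|²)^{1/2} and μ(v) = exp(-|v|²/2). Then |φ(v)| ≤ C |β| δ μ(v)^{1/4} and |∇φ(v)| ≤ C |β| δ μ(v)^{1/4} for all v ∈ ℝ³, with an absolute constant C. -/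
/-- The weight function `U_δ(v) = (1 + δ²|v|²)^{1/2}`. -/
noncomputable def Udelta (δ : ℝ) (v : EuclideanSpace ℝ (Fin 3)) : ℝ :=
  (1 + δ^2 * ‖v‖^2) ^ ((1:ℝ)/2)

/-!
Both `φ` and `∇φ` are radial: `φ(v) = g(|v|²)` with `g(t) = (1 - (1 + δ²t)^{β/4}) e^{-t/4}` and
`∇φ(v) = 2 g'(|v|²) v`. The factor `1 - (1 + δ²|v|²)^{β/4}` lies in `[0, |β| δ |v| / 2]`, because
`1 - y^{-s} ≤ s log y` and `log (1 + y²) ≤ 2y`; the derivative of `(1 + δ²t)^{β/4}` contributes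
`|β| δ² |v| / (1 + δ²|v|²) ≤ |β| δ / 2`. Every power of `|v|` left over is absorbed by half of the
Gaussian `e^{-|v|²/4} = μ^{1/2}`, via `x e^{-x²/8} ≤ 2` and `x² e^{-x²/8} ≤ 8`, leaving `μ^{1/4}`.
-/

open Real

theorem gradient_comp_norm_sq {E : Type*} [NormedAddCommGroup E] [InnerProductSpace ℝ E]
    [CompleteSpace E] {f : ℝ → ℝ} {v : E} (hf : DifferentiableAt ℝ f (‖v‖ ^ 2)) :
    gradient (fun w => f (‖w‖ ^ 2)) v = (2 * deriv f (‖v‖ ^ 2)) • v := by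
  refine HasGradientAt.gradient ?_
  rw [hasGradientAt_iff_hasFDerivAt]
  refine (hf.hasDerivAt.comp_hasFDerivAt v (hasStrictFDerivAt_norm_sq v).hasFDerivAt).congr_fderiv ?_
  ext w
  simp only [smul_apply, coe_innerSL_apply, nsmul_eq_mul, smul_eq_mul, map_smul,
    InnerProductSpace.toDual_apply_apply]
  ring

theorem one_sub_rpow_nonneg {t p : ℝ} (ht : 0 ≤ t) (hp : p ≤ 0) : 0 ≤ 1 - (1 + t) ^ p :=
  sub_nonneg.2 (rpow_le_one_of_one_le_of_nonpos (by linarith) hp)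

theorem log_one_add_sq_le {y : ℝ} (hy : 0 ≤ y) : log (1 + y ^ 2) ≤ 2 * y := by
  calc log (1 + y ^ 2) ≤ log ((1 + y) ^ 2) := log_le_log (by positivity) (by nlinarith)
    _ = 2 * log (1 + y) := by rw [log_pow]; norm_num
    _ ≤ 2 * y := by linarith [log_le_sub_one_of_pos (x := 1 + y) (by positivity)]

theorem one_sub_one_add_sq_rpow_le {y p : ℝ} (hy : 0 ≤ y) (hp : p ≤ 0) :
    1 - (1 + y ^ 2) ^ p ≤ 2 * -p * y := by
  have hpos : 0 < 1 + y ^ 2 := by positivity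
  calc 1 - (1 + y ^ 2) ^ p = 1 - ((1 + y ^ 2) ^ (-p))⁻¹ := by rw [rpow_neg hpos.le, inv_inv]
    _ ≤ log ((1 + y ^ 2) ^ (-p)) := one_sub_inv_le_log_of_pos (by positivity)
    _ = -p * log (1 + y ^ 2) := log_rpow hpos _
    _ ≤ -p * (2 * y) := mul_le_mul_of_nonneg_left (log_one_add_sq_le hy) (by linarith)
    _ = 2 * -p * y := by ring

theorem mul_one_add_sq_rpow_le {δ x p : ℝ} (hδ : 0 ≤ δ) (hx : 0 ≤ x) (hp : p ≤ 0) :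
    δ ^ 2 * x * (1 + δ ^ 2 * x ^ 2) ^ (p - 1) ≤ δ / 2 := by
  have hpos : 0 < 1 + δ ^ 2 * x ^ 2 := by positivity
  have hinv : (1 + δ ^ 2 * x ^ 2) ^ (p - 1) ≤ (1 + δ ^ 2 * x ^ 2)⁻¹ := by
    rw [← rpow_neg_one]
    exact rpow_le_rpow_of_exponent_le (by nlinarith) (by linarith)
  calc δ ^ 2 * x * (1 + δ ^ 2 * x ^ 2) ^ (p - 1) ≤ δ ^ 2 * x * (1 + δ ^ 2 * x ^ 2)⁻¹ :=
        mul_le_mul_of_nonneg_left hinv (by positivity)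
    _ ≤ δ / 2 := by
        rw [← div_eq_mul_inv, div_le_iff₀ hpos]
        nlinarith [sq_nonneg (1 - δ * x)]

theorem mul_exp_neg_sq_div_eight_le (x : ℝ) : x * exp (-x ^ 2 / 8) ≤ 2 := by
  rw [neg_div, exp_neg, ← div_eq_mul_inv, div_le_iff₀ (exp_pos _)]
  nlinarith [add_one_le_exp (x ^ 2 / 8), sq_nonneg (x - 2)]

theorem mul_exp_neg_div_eight_le (t : ℝ) : t * exp (-t / 8) ≤ 8 := by
  rw [neg_div, exp_neg, ← div_eq_mul_inv, div_le_iff₀ (exp_pos _)]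
  linarith [add_one_le_exp (t / 8)]

theorem exp_neg_div_four_eq (t : ℝ) : exp (-t / 4) = exp (-t / 8) * exp (-t / 8) := by
  rw [← exp_add]; ring_nf

noncomputable def phiRadial (β δ t : ℝ) : ℝ := (1 - (1 + δ ^ 2 * t) ^ (β / 4)) * exp (-t / 4)

theorem phi_eq_phiRadial (β δ : ℝ) (v : EuclideanSpace ℝ (Fin 3)) :
    (1 - Udelta δ v ^ (β / 2)) * quantumMu v ^ ((1:ℝ) / 2) = phiRadial β δ (‖v‖ ^ 2) := by
  rw [Udelta, quantumMu, phiRadial, ← rpow_mul (by positivity), ← exp_mul]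
  ring_nf

theorem quantumMu_rpow_quarter (v : EuclideanSpace ℝ (Fin 3)) :
    quantumMu v ^ ((1:ℝ) / 4) = exp (-‖v‖ ^ 2 / 8) := by
  rw [quantumMu, ← exp_mul]
  ring_nf

theorem hasDerivAt_phiRadial (β δ : ℝ) {t : ℝ} (ht : 0 ≤ t) :
    HasDerivAt (phiRadial β δ)
      (-β / 4 * δ ^ 2 * (1 + δ ^ 2 * t) ^ (β / 4 - 1) * exp (-t / 4)
        - (1 - (1 + δ ^ 2 * t) ^ (β / 4)) * exp (-t / 4) / 4) t := by
  have hbase : HasDerivAt (fun t => 1 + δ ^ 2 * t) (δ ^ 2) t := by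
    simpa using ((hasDerivAt_id t).const_mul (δ ^ 2)).const_add 1
  have hpow := (hbase.rpow_const (p := β / 4) (Or.inl (by positivity))).const_sub 1
  have hexp : HasDerivAt (fun t => exp (-t / 4)) (exp (-t / 4) * (-1 / 4)) t :=
    ((hasDerivAt_neg t).div_const 4).exp
  exact (hpow.mul hexp).congr_deriv (by ring)

theorem abs_phiRadial_sq_le {β δ x : ℝ} (hβ : β ≤ 0) (hδ : 0 ≤ δ) (hx : 0 ≤ x) :
    |phiRadial β δ (x ^ 2)| ≤ |β| * δ * exp (-x ^ 2 / 8) := by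
  have hp : β / 4 ≤ 0 := by linarith
  have hgap := one_sub_one_add_sq_rpow_le (mul_nonneg hδ hx) hp
  rw [mul_pow] at hgap
  rw [phiRadial, abs_of_nonneg (mul_nonneg (one_sub_rpow_nonneg (by positivity) hp) (exp_pos _).le),
    abs_of_nonpos hβ, exp_neg_div_four_eq]
  calc (1 - (1 + δ ^ 2 * x ^ 2) ^ (β / 4)) * (exp (-x ^ 2 / 8) * exp (-x ^ 2 / 8))
      ≤ 2 * -(β / 4) * (δ * x) * (exp (-x ^ 2 / 8) * exp (-x ^ 2 / 8)) := by gcongr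
    _ = -β / 2 * δ * (x * exp (-x ^ 2 / 8)) * exp (-x ^ 2 / 8) := by ring
    _ ≤ -β / 2 * δ * 2 * exp (-x ^ 2 / 8) := by
        gcongr
        · exact mul_nonneg (by linarith) hδ
        · exact mul_exp_neg_sq_div_eight_le x
    _ = -β * δ * exp (-x ^ 2 / 8) := by ring

theorem two_mul_abs_deriv_phiRadial_sq_mul_le {β δ x : ℝ} (hβ : β ≤ 0) (hδ : 0 ≤ δ) (hx : 0 ≤ x) :
    2 * |deriv (phiRadial β δ) (x ^ 2)| * x ≤ 9 / 4 * |β| * δ * exp (-x ^ 2 / 8) := by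
  have hp : β / 4 ≤ 0 := by linarith
  have hE4 : exp (-x ^ 2 / 4) ≤ exp (-x ^ 2 / 8) :=
    exp_le_exp.2 (by nlinarith [sq_nonneg x])
  rw [(hasDerivAt_phiRadial β δ (sq_nonneg x)).deriv, abs_of_nonpos hβ]
  set A := -β / 4 * δ ^ 2 * (1 + δ ^ 2 * x ^ 2) ^ (β / 4 - 1) * exp (-x ^ 2 / 4)
  set B := (1 - (1 + δ ^ 2 * x ^ 2) ^ (β / 4)) * exp (-x ^ 2 / 4) / 4
  have hA : 0 ≤ A :=
    mul_nonneg (mul_nonneg (mul_nonneg (by linarith) (sq_nonneg δ)) (rpow_nonneg (by positivity) _))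
      (exp_pos _).le
  have hB : 0 ≤ B :=
    div_nonneg (mul_nonneg (one_sub_rpow_nonneg (by positivity) hp) (exp_pos _).le) zero_le_four
  have hAx : 2 * A * x ≤ -β / 4 * δ * exp (-x ^ 2 / 8) :=
    calc 2 * A * x = 2 * (-β / 4) * (δ ^ 2 * x * (1 + δ ^ 2 * x ^ 2) ^ (β / 4 - 1))
          * exp (-x ^ 2 / 4) := by ring
      _ ≤ 2 * (-β / 4) * (δ / 2) * exp (-x ^ 2 / 8) := by
          have : 0 ≤ -β / 4 := by linarith
          gcongr
          exact mul_one_add_sq_rpow_le hδ hx hp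
      _ = -β / 4 * δ * exp (-x ^ 2 / 8) := by ring
  have hBx : 2 * B * x ≤ 2 * -β * δ * exp (-x ^ 2 / 8) := by
    have hgap := one_sub_one_add_sq_rpow_le (mul_nonneg hδ hx) hp
    rw [mul_pow] at hgap
    calc 2 * B * x = x / 2 * (1 - (1 + δ ^ 2 * x ^ 2) ^ (β / 4))
          * (exp (-x ^ 2 / 8) * exp (-x ^ 2 / 8)) := by rw [← exp_neg_div_four_eq]; ring
      _ ≤ x / 2 * (2 * -(β / 4) * (δ * x)) * (exp (-x ^ 2 / 8) * exp (-x ^ 2 / 8)) := by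
          gcongr
      _ = -β / 4 * δ * (x ^ 2 * exp (-x ^ 2 / 8)) * exp (-x ^ 2 / 8) := by ring
      _ ≤ -β / 4 * δ * 8 * exp (-x ^ 2 / 8) := by
          gcongr
          · exact mul_nonneg (by linarith) hδ
          · exact mul_exp_neg_div_eight_le _
      _ = 2 * -β * δ * exp (-x ^ 2 / 8) := by ring
  calc 2 * |A - B| * x ≤ 2 * (A + B) * x := by
        gcongr
        exact (abs_sub _ _).trans (by rw [abs_of_nonneg hA, abs_of_nonneg hB])
    _ = 2 * A * x + 2 * B * x := by ring
    _ ≤ 9 / 4 * -β * δ * exp (-x ^ 2 / 8) := by linarith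

theorem stmt_15 :
    ∃ C : ℝ, 0 < C ∧ ∀ β δ : ℝ, β < 0 → 0 < δ → δ < 1 →
      ∀ v : EuclideanSpace ℝ (Fin 3),
        |(1 - (Udelta δ v) ^ (β/2)) * (quantumMu v) ^ ((1:ℝ)/2)| ≤
          C * |β| * δ * (quantumMu v) ^ ((1:ℝ)/4) ∧
        ‖gradient (fun w => (1 - (Udelta δ w) ^ (β/2)) * (quantumMu w) ^ ((1:ℝ)/2)) v‖ ≤
          C * |β| * δ * (quantumMu v) ^ ((1:ℝ)/4) := by
  refine ⟨9 / 4, by norm_num, fun β δ hβ hδ _ v => ?_⟩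
  simp only [phi_eq_phiRadial, quantumMu_rpow_quarter]
  constructor
  · refine (abs_phiRadial_sq_le hβ.le hδ.le (norm_nonneg v)).trans ?_
    gcongr
    exact le_mul_of_one_le_left (abs_nonneg β) (by norm_num)
  · rw [gradient_comp_norm_sq (hasDerivAt_phiRadial β δ (sq_nonneg ‖v‖)).differentiableAt,
      norm_smul, Real.norm_eq_abs, abs_mul, abs_two]
    exact two_mul_abs_deriv_phiRadial_sq_mul_le hβ.le hδ.le (norm_nonneg v)
end

section
/- Let v, v* ∈ ℝ³, σ ∈ 𝕊², v' = (v+v*)/2 + (|v-v*|/2)σ, and v(κ) = (1-κ)v + κv' for κ ∈ [0,1]. Then |v'_*|² + |v(κ)|² is comparable to |v|² + |v*|², with absolute constants, where v'_* = (v+v*)/2 - (|v-v*|/2)σ, provided the angle θ between v-v* and σ satisfies 0 ≤ θ ≤ π/2. -/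
set_option maxHeartbeats 1000000 in
theorem scalar_aux (A B p q r d κ : ℝ) (hA : 0 ≤ A) (hB : 0 ≤ B) (hd0 : 0 ≤ d)
    (hκ0 : 0 ≤ κ) (hκ1 : κ ≤ 1) (hd2 : d^2 = A - 2*p + B)
    (hqr : 0 ≤ q - r) (hqr2 : q - r ≤ d) (hCS2 : (q+r)^2 ≤ A + 2*p + B)
    (hCS3 : ((A - B)/4 - (d/4)*(q+r))^2 ≤ ((A+2*p+B)/4) * (d^2/2 - d*(q-r)/2)) :
    1/8 * (A + B) ≤
        ((A + 2*p + B)/4 - (d/2)*(q+r) + d^2/4) +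
        ((1-κ/2)^2*A + (κ^2/4)*B + κ^2*d^2/4 + (1-κ/2)*κ*p + (1-κ/2)*κ*d*q + (κ^2/2)*d*r) ∧
      ((A + 2*p + B)/4 - (d/2)*(q+r) + d^2/4) +
        ((1-κ/2)^2*A + (κ^2/4)*B + κ^2*d^2/4 + (1-κ/2)*κ*p + (1-κ/2)*κ*d*q + (κ^2/2)*d*r) ≤
      2 * (A + B) := by
  obtain ⟨M, hM⟩ : ∃ M : ℝ, M = (A+2*p+B)/4 := ⟨_, rfl⟩
  obtain ⟨W, hW⟩ : ∃ W : ℝ, W = d^2/2 - d*(q-r)/2 := ⟨_, rfl⟩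
  obtain ⟨G, hG⟩ : ∃ G : ℝ, G = (A - B)/4 - (d/4)*(q+r) := ⟨_, rfl⟩
  rw [show (A - B)/4 - (d/4)*(q+r) = G from hG.symm,
      show ((A+2*p+B)/4 : ℝ) = M from hM.symm,
      show (d^2/2 - d*(q-r)/2 : ℝ) = W from hW.symm] at hCS3
  have hM0 : 0 ≤ M := by rw [hM]; nlinarith [sq_nonneg (q+r)]
  have hW0 : 0 ≤ W := by rw [hW]; nlinarith [mul_nonneg hd0 hqr]
  have hWd : W ≤ d^2/2 := by rw [hW]; nlinarith [mul_nonneg hd0 hqr]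
  have hEid : A + B = 2*M + d^2/2 := by rw [hM]; linarith [hd2]
  have ht0 : 0 ≤ 7/4*M + 4/7*W := by linarith
  have habs : 2*|G| ≤ 7/4*M + 4/7*W := by
    have hsq : (2*|G|)^2 ≤ (7/4*M + 4/7*W)^2 := by
      nlinarith [sq_abs G, hCS3, sq_nonneg (7/4*M - 4/7*W)]
    have h0 : 0 ≤ 2*|G| := by positivity
    nlinarith [sq_nonneg (2*|G| - (7/4*M + 4/7*W)), mul_nonneg h0 ht0]
  have hGl : -(7/4*M + 4/7*W) ≤ 2*G := by
    have := neg_abs_le G; linarith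
  have hGu : 2*G ≤ 7/4*M + 4/7*W := by
    have := le_abs_self G; linarith
  have hk1 : 0 ≤ 1 - κ := by linarith
  have hU : 0 ≤ κ*(1-κ)*(d*(q-r)) := by positivity
  have hUu : κ*(1-κ)*(d*(q-r)) ≤ d^2/4 := by
    nlinarith [mul_nonneg hd0 hqr, mul_nonneg hd0 hd0, sq_nonneg (1-2*κ)]
  have hf1 : d^2/8 ≤ d^2*((1-κ)^2+κ^2)/4 := by
    nlinarith [mul_nonneg (sq_nonneg (1-2*κ)) (sq_nonneg d)]
  have hf1u : d^2*((1-κ)^2+κ^2)/4 ≤ d^2/4 := by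
    nlinarith [mul_nonneg (mul_nonneg hκ0 hk1) (sq_nonneg d)]
  have hGl2 : -(7/4*M + 4/7*W) ≤ 2*(1-κ)*G := by
    rcases le_or_gt 0 G with h | h
    · nlinarith [mul_nonneg hk1 h]
    · nlinarith [mul_nonneg hκ0 (neg_nonneg.2 h.le)]
  have hGu2 : 2*(1-κ)*G ≤ 7/4*M + 4/7*W := by
    rcases le_or_gt 0 G with h | h
    · nlinarith [mul_nonneg hκ0 h]
    · nlinarith [mul_nonneg hk1 (neg_nonneg.2 h.le)]
  have hid :
      ((A + 2*p + B)/4 - (d/2)*(q+r) + d^2/4) +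
        ((1-κ/2)^2*A + (κ^2/4)*B + κ^2*d^2/4 + (1-κ/2)*κ*p + (1-κ/2)*κ*d*q + (κ^2/2)*d*r)
      = 2*M + d^2/4 + (d^2*((1-κ)^2+κ^2)/4 + κ*(1-κ)*(d*(q-r))/2) + 2*(1-κ)*G
        + ((1-κ)^2/4)*((A-2*p+B) - d^2) := by
    rw [hM, hG]; ring
  have hzero : ((1-κ)^2/4)*((A-2*p+B) - d^2) = 0 := by rw [hd2]; ring
  rw [hid, hzero]
  constructor
  · linarith [hWd, hM0]
  · linarith [hWd, hM0, hW0]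

open scoped RealInnerProductSpace

theorem stmt_17 :
    ∃ c C : ℝ, 0 < c ∧ 0 < C ∧
      ∀ (v vs σ : EuclideanSpace ℝ (Fin 3)) (κ : ℝ),
        ‖σ‖ = 1 → 0 ≤ κ → κ ≤ 1 →
        -- the angle θ between v - vs and σ satisfies 0 ≤ θ ≤ π/2, i.e. cos θ ≥ 0
        0 ≤ ⟪v - vs, σ⟫ →
        c * (‖v‖^2 + ‖vs‖^2) ≤
            ‖((1:ℝ)/2) • (v + vs) - (‖v - vs‖ / 2) • σ‖^2 +
              ‖(1 - κ) • v + κ • (((1:ℝ)/2) • (v + vs) + (‖v - vs‖ / 2) • σ)‖^2 ∧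
          ‖((1:ℝ)/2) • (v + vs) - (‖v - vs‖ / 2) • σ‖^2 +
              ‖(1 - κ) • v + κ • (((1:ℝ)/2) • (v + vs) + (‖v - vs‖ / 2) • σ)‖^2 ≤
            C * (‖v‖^2 + ‖vs‖^2) := by
  refine ⟨1/8, 2, by norm_num, by norm_num, ?_⟩
  intro v vs σ κ hσ hκ0 hκ1 hcos
  have key : ∀ x y : EuclideanSpace ℝ (Fin 3), ⟪x, y⟫^2 ≤ ‖x‖^2 * ‖y‖^2 := by
    intro x y
    have h := abs_real_inner_le_norm x y
    nlinarith [abs_nonneg (⟪x, y⟫), sq_abs (⟪x, y⟫), norm_nonneg x, norm_nonneg y,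
      mul_nonneg (norm_nonneg x) (norm_nonneg y)]
  have hσσ : ⟪σ, σ⟫ = (1:ℝ) := by
    rw [real_inner_self_eq_norm_sq, hσ]; norm_num
  have hd2 : ‖v - vs‖^2 = ‖v‖^2 - 2*⟪v, vs⟫ + ‖vs‖^2 := by
    rw [← real_inner_self_eq_norm_sq, inner_sub_sub_self,
      real_inner_self_eq_norm_sq, real_inner_self_eq_norm_sq, real_inner_comm vs v]
    ring
  have hqr : 0 ≤ ⟪v, σ⟫ - ⟪vs, σ⟫ := by
    rw [inner_sub_left] at hcos; linarith
  have hqr2 : ⟪v, σ⟫ - ⟪vs, σ⟫ ≤ ‖v - vs‖ := by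
    calc ⟪v, σ⟫ - ⟪vs, σ⟫ = ⟪v - vs, σ⟫ := by rw [inner_sub_left]
    _ ≤ ‖v - vs‖ * ‖σ‖ := real_inner_le_norm _ _
    _ = ‖v - vs‖ := by rw [hσ, mul_one]
  have hsum : ‖v + vs‖^2 = ‖v‖^2 + 2*⟪v, vs⟫ + ‖vs‖^2 := by
    rw [← real_inner_self_eq_norm_sq, inner_add_add_self,
      real_inner_self_eq_norm_sq, real_inner_self_eq_norm_sq, real_inner_comm vs v]
    ring
  have hCS2 : (⟪v, σ⟫ + ⟪vs, σ⟫)^2 ≤ ‖v‖^2 + 2*⟪v, vs⟫ + ‖vs‖^2 := by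
    have h1 : ⟪v, σ⟫ + ⟪vs, σ⟫ = ⟪v + vs, σ⟫ := by rw [inner_add_left]
    have h2 := key (v + vs) σ
    rw [← h1, hσ, hsum] at h2
    nlinarith [h2]
  have hCS3 : ((‖v‖^2 - ‖vs‖^2)/4 - (‖v - vs‖/4)*(⟪v, σ⟫ + ⟪vs, σ⟫))^2 ≤
      ((‖v‖^2 + 2*⟪v, vs⟫ + ‖vs‖^2)/4) *
        (‖v - vs‖^2/2 - ‖v - vs‖*(⟪v, σ⟫ - ⟪vs, σ⟫)/2) := by
    have h2 := key (((1:ℝ)/2) • (v + vs)) (((1:ℝ)/2) • (v - vs) - (‖v - vs‖/2) • σ)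
    have e3 : ⟪((1:ℝ)/2) • (v + vs), ((1:ℝ)/2) • (v - vs) - (‖v - vs‖/2) • σ⟫
        = (‖v‖^2 - ‖vs‖^2)/4 - (‖v - vs‖/4)*(⟪v, σ⟫ + ⟪vs, σ⟫) := by
      simp only [inner_sub_right, inner_add_left, inner_sub_left, inner_add_right,
        real_inner_smul_left, real_inner_smul_right]
      rw [real_inner_self_eq_norm_sq, real_inner_self_eq_norm_sq, real_inner_comm vs v]
      ring
    have e4 : ‖((1:ℝ)/2) • (v + vs)‖^2 = (‖v‖^2 + 2*⟪v, vs⟫ + ‖vs‖^2)/4 := by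
      rw [norm_smul, mul_pow, hsum]
      norm_num [Real.norm_eq_abs]
      ring
    have e5 : ‖((1:ℝ)/2) • (v - vs) - (‖v - vs‖/2) • σ‖^2
        = ‖v - vs‖^2/2 - ‖v - vs‖*(⟪v, σ⟫ - ⟪vs, σ⟫)/2 := by
      rw [← real_inner_self_eq_norm_sq]
      simp only [inner_sub_left, inner_sub_right, real_inner_smul_left, real_inner_smul_right,
        hσσ]
      rw [real_inner_self_eq_norm_sq v, real_inner_self_eq_norm_sq vs]
      simp only [real_inner_comm v vs, real_inner_comm v σ, real_inner_comm vs σ]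
      linear_combination (-1/4 : ℝ) * hd2
    rw [e3, e4, e5] at h2
    exact h2
  have e1 : ‖((1:ℝ)/2) • (v + vs) - (‖v - vs‖ / 2) • σ‖^2
      = (‖v‖^2 + 2*⟪v, vs⟫ + ‖vs‖^2)/4 - (‖v - vs‖/2)*(⟪v, σ⟫ + ⟪vs, σ⟫) + ‖v - vs‖^2/4 := by
    rw [← real_inner_self_eq_norm_sq]
    simp only [inner_sub_left, inner_sub_right, inner_add_left, inner_add_right,
      real_inner_smul_left, real_inner_smul_right, hσσ]
    rw [real_inner_self_eq_norm_sq v, real_inner_self_eq_norm_sq vs, real_inner_comm vs v,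
      real_inner_comm σ v, real_inner_comm σ vs]
    ring
  have e2 : ‖(1 - κ) • v + κ • (((1:ℝ)/2) • (v + vs) + (‖v - vs‖ / 2) • σ)‖^2
      = (1-κ/2)^2*‖v‖^2 + (κ^2/4)*‖vs‖^2 + κ^2*‖v - vs‖^2/4 + (1-κ/2)*κ*⟪v, vs⟫
        + (1-κ/2)*κ*‖v - vs‖*⟪v, σ⟫ + (κ^2/2)*‖v - vs‖*⟪vs, σ⟫ := by
    rw [← real_inner_self_eq_norm_sq]
    simp only [inner_add_left, inner_add_right, real_inner_smul_left, real_inner_smul_right,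
      hσσ]
    rw [real_inner_self_eq_norm_sq v, real_inner_self_eq_norm_sq vs, real_inner_comm vs v,
      real_inner_comm σ v, real_inner_comm σ vs]
    ring
  rw [e1, e2]
  have := scalar_aux (‖v‖^2) (‖vs‖^2) (⟪v, vs⟫) (⟪v, σ⟫) (⟪vs, σ⟫) (‖v - vs‖) κ
    (sq_nonneg _) (sq_nonneg _) (norm_nonneg _) hκ0 hκ1 hd2 hqr hqr2 hCS2 hCS3
  constructor
  · linarith [this.1]
  · linarith [this.2]
end
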